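/- The capped l_{p,q}-norm of a matrix satisfies the triangle inequality: for all matrices A, B of the same size and p, q ≥ 1, ‖A + B‖_{cap p,q} ≤ ‖A‖_{cap p,q} + ‖B‖_{cap p,q}. -/

import Mathlib

/-!
Capping the `q`-th power of a column norm at `ε` is the same as capping the column norm itself
at `ε ^ (1 / q)`, so the capped norm is the outer `ℓ_q` norm of the vector of capped column
`ℓ_p` norms. Minkowski's inequality for the columns, subadditivity of `x ↦ min x c` on
nonnegative numbers, monotonicity of the `ℓ_q` norm and Minkowski's inequality for the outer
norm then give the triangle inequality.
-/

open Finset Real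

/-- The capped `l_{p,q}`-norm of a real `r × s` matrix with threshold `ε`. -/
noncomputable def cappedNorm {r s : ℕ} (p q ε : ℝ) (M : Matrix (Fin r) (Fin s) ℝ) : ℝ :=
  (∑ j : Fin s, min (((∑ i : Fin r, |M i j| ^ p) ^ (1 / p)) ^ q) ε) ^ (1 / q)

theorem min_add_le_min_add_min {α : Type*} [AddCommMonoid α] [LinearOrder α]
    [IsOrderedAddMonoid α] {a b c : α} (ha : 0 ≤ a) (hb : 0 ≤ b) (hc : 0 ≤ c) :
    min (a + b) c ≤ min a c + min b c := by
  rcases le_total a c with hac | hca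
  · rcases le_total b c with hbc | hcb
    · simp only [min_eq_left hac, min_eq_left hbc, min_le_left]
    · rw [min_eq_right hcb]
      exact (min_le_right _ _).trans (le_add_of_nonneg_left (le_min ha hc))
  · rw [min_eq_right hca]
    exact (min_le_right _ _).trans (le_add_of_nonneg_right (le_min hb hc))

theorem Real.min_rpow_of_nonneg {x y q : ℝ} (hx : 0 ≤ x) (hy : 0 ≤ y) (hq : 0 ≤ q) :
    min x y ^ q = min (x ^ q) (y ^ q) :=
  (monotoneOn_rpow_Ici_of_exponent_nonneg hq).map_min hx hy

section VecLpNorm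

variable {ι : Type*} [Fintype ι]

noncomputable def vecLpNorm (p : ℝ) (v : ι → ℝ) : ℝ :=
  (∑ i, |v i| ^ p) ^ (1 / p)

theorem vecLpNorm_nonneg (p : ℝ) (v : ι → ℝ) : 0 ≤ vecLpNorm p v := by
  unfold vecLpNorm
  positivity

theorem vecLpNorm_add_le {p : ℝ} (hp : 1 ≤ p) (u v : ι → ℝ) :
    vecLpNorm p (u + v) ≤ vecLpNorm p u + vecLpNorm p v :=
  Real.Lp_add_le univ u v hp

theorem vecLpNorm_mono {p : ℝ} (hp : 0 < p) {u v : ι → ℝ} (hu : 0 ≤ u) (huv : u ≤ v) :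
    vecLpNorm p u ≤ vecLpNorm p v := by
  unfold vecLpNorm
  gcongr with i
  · exact hu i
  · exact huv i

theorem rpow_sum_min_rpow_eq_vecLpNorm_min {q ε : ℝ} (hq : 0 < q) (hε : 0 ≤ ε) {v : ι → ℝ}
    (hv : 0 ≤ v) :
    (∑ i, min (v i ^ q) ε) ^ (1 / q) = vecLpNorm q fun i => min (v i) (ε ^ (1 / q)) := by
  unfold vecLpNorm
  congr 1
  refine sum_congr rfl fun i _ => ?_
  have hcap : 0 ≤ ε ^ (1 / q) := by positivity
  rw [abs_of_nonneg (le_min (hv i) hcap), min_rpow_of_nonneg (hv i) hcap hq.le, one_div,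
    rpow_inv_rpow hε hq.ne']

end VecLpNorm

theorem cappedNorm_eq_vecLpNorm_min {r s : ℕ} {p q ε : ℝ} (hq : 0 < q) (hε : 0 ≤ ε)
    (M : Matrix (Fin r) (Fin s) ℝ) :
    cappedNorm p q ε M =
      vecLpNorm q fun j => min (vecLpNorm p fun i => M i j) (ε ^ (1 / q)) :=
  rpow_sum_min_rpow_eq_vecLpNorm_min hq hε fun _ => vecLpNorm_nonneg p _

theorem cappedNorm_triangle {r s : ℕ} (p q ε : ℝ) (hp : 1 ≤ p) (hq : 1 ≤ q) (hε : 0 < ε)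
    (A B : Matrix (Fin r) (Fin s) ℝ) :
    cappedNorm p q ε (A + B) ≤ cappedNorm p q ε A + cappedNorm p q ε B := by
  have hq₀ : 0 < q := one_pos.trans_le hq
  set cap := ε ^ (1 / q)
  have hcap : 0 ≤ cap := by positivity
  set col : Matrix (Fin r) (Fin s) ℝ → Fin s → ℝ := fun M j => vecLpNorm p fun i => M i j
  have hcol (M : Matrix (Fin r) (Fin s) ℝ) (j : Fin s) : 0 ≤ col M j := vecLpNorm_nonneg p _
  have hcapped_col_add_le (j : Fin s) :
      min (col (A + B) j) cap ≤ min (col A j) cap + min (col B j) cap :=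
    (min_le_min_right cap (vecLpNorm_add_le hp _ _)).trans
      (min_add_le_min_add_min (hcol A j) (hcol B j) hcap)
  simp only [cappedNorm_eq_vecLpNorm_min hq₀ hε.le]
  calc vecLpNorm q (fun j => min (col (A + B) j) cap)
      ≤ vecLpNorm q ((fun j => min (col A j) cap) + fun j => min (col B j) cap) :=
        vecLpNorm_mono hq₀ (fun j => le_min (hcol _ j) hcap) hcapped_col_add_le
    _ ≤ _ := vecLpNorm_add_le hq _ _
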